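/- Let Δ ⊂ ℝ³ be the standard simplex with vertices (0,0,0), (1,0,0), (0,1,0), (0,0,1). For all positive real t, the Ehrhart function satisfies L_Δ(t) = (1/6)t³ + (-(1/2)B̄₁⁺(t) + 3/4)t² + ((1/2)B̄₂(t) - (3/2)B̄₁⁺(t) + 1)t - (1/6)B̄₃(t) + (3/4)B̄₂(t) - B̄₁⁺(t) + 3/8. -/

import Mathlib

open scoped BigOperators
open Pointwise
attribute [local instance] Classical.propDecidable

/-- One-sided periodized first Bernoulli polynomial `B̄₁⁺(x) = x - ⌊x⌋ - 1/2`
(which equals `-1/2` at integers). -/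
noncomputable def B1plus (x : ℝ) : ℝ := Int.fract x - 1/2

/-- Periodized second Bernoulli polynomial. -/
noncomputable def B2bar (x : ℝ) : ℝ := (Int.fract x)^2 - Int.fract x + 1/6

/-- Periodized third Bernoulli polynomial. -/
noncomputable def B3bar (x : ℝ) : ℝ :=
  (Int.fract x)^3 - (3/2) * (Int.fract x)^2 + (1/2) * Int.fract x

/-- The standard simplex in `ℝ³`. -/
noncomputable def stdSimplex3 : Set (Fin 3 → ℝ) :=
  convexHull ℝ {![0,0,0], ![1,0,0], ![0,1,0], ![0,0,1]}

private lemma stdSimplex3_eq :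
    stdSimplex3 = {x : Fin 3 → ℝ | (∀ i, 0 ≤ x i) ∧ ∑ i, x i ≤ 1} := by
  apply le_antisymm
  · apply convexHull_min
    · intro x hx
      simp only [Set.mem_insert_iff, Set.mem_singleton_iff] at hx
      rcases hx with h | h | h | h <;> subst h <;>
        refine ⟨fun i => by fin_cases i <;> norm_num, by simp [Fin.sum_univ_three]⟩
    · intro x hx y hy a b ha hb hab
      refine ⟨fun i => ?_, ?_⟩
      · have : (a • x + b • y) i = a * x i + b * y i := by simp [smul_eq_mul]
        rw [this]
        exact add_nonneg (mul_nonneg ha (hx.1 i)) (mul_nonneg hb (hy.1 i))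
      · have : ∑ i, (a • x + b • y) i = a * ∑ i, x i + b * ∑ i, y i := by
          simp [Finset.sum_add_distrib, Finset.mul_sum, smul_eq_mul]
        rw [this]
        nlinarith [hx.2, hy.2]
  · intro x hx
    obtain ⟨hx0, hx1⟩ := hx
    rw [Fin.sum_univ_three] at hx1
    set w : Fin 4 → ℝ := ![1 - ∑ i, x i, x 0, x 1, x 2] with hw
    set z : Fin 4 → (Fin 3 → ℝ) := ![![0,0,0], ![1,0,0], ![0,1,0], ![0,0,1]] with hz
    have hwsum : ∑ i, w i = 1 := by
      simp [hw, Fin.sum_univ_four, Fin.sum_univ_three]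
      ring
    have hmem := Finset.centerMass_mem_convexHull (R := ℝ) Finset.univ
      (w := w) (z := z)
      (fun i _ => by
        fin_cases i <;> simp [hw, Fin.sum_univ_three]
        · linarith [hx1]
        · exact hx0 0
        · exact hx0 1
        · exact hx0 2)
      (by rw [hwsum]; norm_num)
      (s := ({![0,0,0], ![1,0,0], ![0,1,0], ![0,0,1]} : Set (Fin 3 → ℝ)))
      (fun i _ => by fin_cases i <;> simp [hz])
    have hcm : Finset.univ.centerMass w z = x := by
      rw [Finset.centerMass, hwsum, inv_one, one_smul]
      funext j
      rw [Finset.sum_apply]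
      simp only [Pi.smul_apply, smul_eq_mul, Fin.sum_univ_four, hw, hz]
      fin_cases j <;>
        norm_num [Matrix.vecHead, Matrix.vecTail, Fin.sum_univ_three] <;> simp [Matrix.cons_val]
    rw [hcm] at hmem
    exact hmem

private def ehT2 (n : ℕ) : Finset (ℕ × ℕ) :=
  (Finset.range (n+1) ×ˢ Finset.range (n+1)).filter fun p => p.1 + p.2 = n

private def ehD2 (n : ℕ) : Finset (ℕ × ℕ) :=
  (Finset.range (n+1) ×ˢ Finset.range (n+1)).filter fun p => p.1 + p.2 ≤ n

private def ehT3 (n : ℕ) : Finset (ℕ × ℕ × ℕ) :=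
  (Finset.range (n+1) ×ˢ Finset.range (n+1) ×ˢ Finset.range (n+1)).filter
    fun p => p.1 + p.2.1 + p.2.2 = n

private def ehD3 (n : ℕ) : Finset (ℕ × ℕ × ℕ) :=
  (Finset.range (n+1) ×ˢ Finset.range (n+1) ×ˢ Finset.range (n+1)).filter
    fun p => p.1 + p.2.1 + p.2.2 ≤ n

private lemma ehD3_mem (n : ℕ) (p : ℕ × ℕ × ℕ) :
    p ∈ ehD3 n ↔ p.1 < n+1 ∧ p.2.1 < n+1 ∧ p.2.2 < n+1 ∧ p.1 + p.2.1 + p.2.2 ≤ n := by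
  simp [ehD3, Finset.mem_filter, Finset.mem_product, Finset.mem_range]
  tauto

private lemma ehT2_card (n : ℕ) : (ehT2 n).card = n + 1 := by
  have h : ehT2 n = Finset.HasAntidiagonal.antidiagonal n := by
    ext p
    simp [ehT2, Finset.mem_filter, Finset.mem_product, Finset.mem_range,
      Finset.mem_antidiagonal]
    omega
  rw [h, Finset.Nat.card_antidiagonal]

private lemma ehD2_card (n : ℕ) : 2 * (ehD2 n).card = (n+1) * (n+2) := by
  induction n with
  | zero =>
    have h : ehD2 0 = {(0,0)} := by
      ext p
      simp [ehD2, Finset.mem_filter, Finset.mem_product, Finset.mem_range, Prod.ext_iff]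
    rw [h]; rfl
  | succ n ih =>
    have h : ehD2 (n+1) = ehD2 n ∪ ehT2 (n+1) := by
      ext p
      simp [ehD2, ehT2, Finset.mem_filter, Finset.mem_product, Finset.mem_range,
        Finset.mem_union]
      omega
    have hd : Disjoint (ehD2 n) (ehT2 (n+1)) := by
      rw [Finset.disjoint_left]
      intro p hp hq
      simp [ehD2, ehT2, Finset.mem_filter, Finset.mem_product, Finset.mem_range] at hp hq
      omega
    rw [h, Finset.card_union_of_disjoint hd, ehT2_card]
    zify at ih ⊢
    linear_combination ih

private lemma ehT3_card (n : ℕ) : 2 * (ehT3 n).card = (n+1) * (n+2) := by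
  have h : (ehT3 n).card = (ehD2 n).card := by
    apply Finset.card_bij' (fun p _ => (p.1, p.2.1)) (fun q _ => (q.1, q.2, n - q.1 - q.2))
    · intro p hp
      simp [ehT3, Finset.mem_filter, Finset.mem_product, Finset.mem_range] at hp
      simp [ehD2, Finset.mem_filter, Finset.mem_product, Finset.mem_range]
      omega
    · intro q hq
      simp [ehD2, Finset.mem_filter, Finset.mem_product, Finset.mem_range] at hq
      simp [ehT3, Finset.mem_filter, Finset.mem_product, Finset.mem_range]
      omega
    · intro p hp
      simp [ehT3, Finset.mem_filter, Finset.mem_product, Finset.mem_range] at hp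
      ext <;> simp <;> omega
    · intro q hq
      rfl
  rw [h]; exact ehD2_card n

private lemma ehD3_card (n : ℕ) : 6 * (ehD3 n).card = (n+1) * (n+2) * (n+3) := by
  induction n with
  | zero =>
    have h : ehD3 0 = {(0,0,0)} := by
      ext p
      simp [ehD3, Finset.mem_filter, Finset.mem_product, Finset.mem_range, Prod.ext_iff]
      omega
    rw [h]; rfl
  | succ n ih =>
    have h : ehD3 (n+1) = ehD3 n ∪ ehT3 (n+1) := by
      ext p
      simp [ehD3, ehT3, Finset.mem_filter, Finset.mem_product, Finset.mem_range,
        Finset.mem_union]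
      omega
    have hd : Disjoint (ehD3 n) (ehT3 (n+1)) := by
      rw [Finset.disjoint_left]
      intro p hp hq
      simp [ehD3, ehT3, Finset.mem_filter, Finset.mem_product, Finset.mem_range] at hp hq
      omega
    have ht := ehT3_card (n+1)
    rw [h, Finset.card_union_of_disjoint hd]
    zify at ih ht ⊢
    linear_combination ih + 3 * ht

private lemma mem_smul_simplex (t : ℝ) (ht : 0 < t) (x : Fin 3 → ℝ) :
    x ∈ t • stdSimplex3 ↔ (∀ i, 0 ≤ x i) ∧ x 0 + x 1 + x 2 ≤ t := by
  rw [Set.mem_smul_set_iff_inv_smul_mem₀ ht.ne', stdSimplex3_eq]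
  simp only [Set.mem_setOf_eq, Pi.smul_apply, smul_eq_mul, Fin.sum_univ_three]
  have key : ∀ y : ℝ, t * (t⁻¹ * y) = y := fun y => by field_simp
  constructor
  · rintro ⟨h0, h1⟩
    refine ⟨fun i => ?_, ?_⟩
    · calc (0:ℝ) ≤ t * (t⁻¹ * x i) := mul_nonneg ht.le (h0 i)
        _ = x i := key _
    · calc x 0 + x 1 + x 2
          = t * (t⁻¹ * x 0 + t⁻¹ * x 1 + t⁻¹ * x 2) := by
            rw [mul_add, mul_add, key, key, key]
        _ ≤ t * 1 := mul_le_mul_of_nonneg_left h1 ht.le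
        _ = t := mul_one t
  · rintro ⟨h0, h1⟩
    refine ⟨fun i => mul_nonneg (inv_pos.mpr ht).le (h0 i), ?_⟩
    calc t⁻¹ * x 0 + t⁻¹ * x 1 + t⁻¹ * x 2
        = t⁻¹ * (x 0 + x 1 + x 2) := by ring
      _ ≤ t⁻¹ * t := mul_le_mul_of_nonneg_left h1 (inv_pos.mpr ht).le
      _ = 1 := inv_mul_cancel₀ ht.ne'

/-- The Ehrhart function of the standard simplex `Δ ⊂ ℝ³` for all positive real dilates `t`. -/
theorem ehrhart_standard_simplex (t : ℝ) (ht : 0 < t) :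
    (Set.ncard {n : Fin 3 → ℤ | (fun i => (n i : ℝ)) ∈ t • stdSimplex3} : ℝ) =
      (1/6) * t^3 + (-(1/2) * B1plus t + 3/4) * t^2 +
        ((1/2) * B2bar t - (3/2) * B1plus t + 1) * t -
        (1/6) * B3bar t + (3/4) * B2bar t - B1plus t + 3/8 := by
  have hfl : (0:ℤ) ≤ ⌊t⌋ := Int.floor_nonneg.mpr ht.le
  set m : ℕ := ⌊t⌋.toNat with hm
  have hmz : (m : ℤ) = ⌊t⌋ := Int.toNat_of_nonneg hfl
  have hginj : Function.Injective
      (fun p : ℕ × ℕ × ℕ => (![(p.1:ℤ), (p.2.1:ℤ), (p.2.2:ℤ)] : Fin 3 → ℤ)) := by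
    intro p q h
    have h0 := congrFun h 0
    have h1 := congrFun h 1
    have h2 := congrFun h 2
    simp at h0 h1 h2
    exact Prod.ext h0 (Prod.ext h1 h2)
  have hset : {n : Fin 3 → ℤ | (fun i => (n i : ℝ)) ∈ t • stdSimplex3}
      = ↑((ehD3 m).image
          (fun p : ℕ × ℕ × ℕ => (![(p.1:ℤ), (p.2.1:ℤ), (p.2.2:ℤ)] : Fin 3 → ℤ))) := by
    ext n
    rw [Set.mem_setOf_eq, mem_smul_simplex t ht]
    simp only [Finset.coe_image, Set.mem_image, Finset.mem_coe]
    constructor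
    · rintro ⟨h0, h1⟩
      have h0' : ∀ i, 0 ≤ n i := fun i => by exact_mod_cast h0 i
      have h1' : n 0 + n 1 + n 2 ≤ ⌊t⌋ := by
        rw [Int.le_floor]; push_cast; exact h1
      refine ⟨((n 0).toNat, (n 1).toNat, (n 2).toNat), ?_, ?_⟩
      · rw [ehD3_mem]
        have e0 := h0' 0; have e1 := h0' 1; have e2 := h0' 2
        simp only
        omega
      · funext i
        fin_cases i <;> simp [Int.toNat_of_nonneg (h0' _)]
    · rintro ⟨p, hp, rfl⟩
      rw [ehD3_mem] at hp
      have hps : (p.1 : ℤ) + p.2.1 + p.2.2 ≤ ⌊t⌋ := by omega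
      have hle : ((p.1 : ℤ) : ℝ) + ((p.2.1 : ℤ) : ℝ) + ((p.2.2 : ℤ) : ℝ) ≤ t := by
        push_cast
        have h2 : ((p.1 : ℝ)) + p.2.1 + p.2.2 ≤ (⌊t⌋ : ℝ) := by exact_mod_cast hps
        linarith [Int.floor_le t]
      constructor
      · intro i
        fin_cases i <;> simp
      · simpa using hle
  rw [hset, Set.ncard_coe_finset, Finset.card_image_of_injective _ hginj]
  have hcard := ehD3_card m
  have hcardR : ((ehD3 m).card : ℝ) = ((m:ℝ)+1) * ((m:ℝ)+2) * ((m:ℝ)+3) / 6 := by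
    have : (6 : ℝ) * ((ehD3 m).card : ℝ) = ((m:ℝ)+1) * ((m:ℝ)+2) * ((m:ℝ)+3) := by
      exact_mod_cast congrArg (fun k : ℕ => (k : ℝ)) hcard
    linarith
  rw [hcardR]
  have hM : ((m:ℝ)) = ((⌊t⌋ : ℤ) : ℝ) := by exact_mod_cast hmz
  rw [hM]
  simp only [B1plus, B2bar, B3bar]
  set F := Int.fract t with hF
  set M := ((⌊t⌋ : ℤ) : ℝ) with hMM
  have ht' : t = M + F := by rw [hMM, hF, Int.floor_add_fract]
  rw [ht']
  ring
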